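/- arXiv:1212.6425 — 3 statements merged into one kernel-verified Lean document; each statement's English description precedes it below -/
import Mathlib

section
/- Let G be a countable group, Λ < G a subgroup, and θ : Λ → G an injective homomorphism with Λ ≠ G and θ(Λ) ≠ G. Let Γ = HNN(G, Λ, θ) be the HNN extension. If there exist h₁, …, h_m ∈ Γ with ⋂_{i=1}^m h_i Λ h_i⁻¹ = {e}, then Γ is not inner amenable; i.e., there is no conjugation-invariant finitely additive probability measure on Γ \ {e}. -/
/-- A group `Γ` is inner amenable if there is a conjugation-invariant finitely additive
probability measure on `Γ \ {e}` (extended by `0` on `{e}`). -/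
def InnerAmenable (Γ : Type*) [Group Γ] : Prop :=
  ∃ m : Set Γ → ℝ,
    m ({1}ᶜ) = 1 ∧
    m {1} = 0 ∧
    (∀ A : Set Γ, 0 ≤ m A) ∧
    (∀ A B : Set Γ, A ⊆ B → m A ≤ m B) ∧
    (∀ A B : Set Γ, Disjoint A B → m (A ∪ B) = m A + m B) ∧
    (∀ (g : Γ) (A : Set Γ), m ((fun x => g * x * g⁻¹) '' A) = m A)

/-!
Let `M` be a conjugation-invariant mean on `Γ = HNN(G, Λ, θ)`. By Britton's lemma the sequence of
exponents of `t` in a reduced word for `x` (its pattern) depends only on `x`. For `u = ±1`, the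
elements whose pattern starts with exactly `n` letters `u`, then `-u`, and ends with `-u` form
pairwise disjoint sets as `n` varies, and conjugation by `t^u` maps the `n`-th one into the
`(n+1)`-st; so the first one is `M`-null. Every element outside `Λ` is conjugated into one of
these two null sets by one of finitely many elements built from `t^{±1}` and fixed elements
`c₁ ∉ Λ`, `c₋₁ ∉ θ(Λ)`. Hence `M` is concentrated on `Λ`, so on every conjugate `hᵢ Λ hᵢ⁻¹`, so
on their intersection, which is trivial: this contradicts `M (Γ \ {1}) = 1`.
-/

open Set Function

structure ConjInvariantMean (Γ : Type*) [Group Γ] where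
  toFun : Set Γ → ℝ
  compl_one : toFun {1}ᶜ = 1
  singleton_one : toFun {1} = 0
  nonneg : ∀ A, 0 ≤ toFun A
  mono : ∀ A B, A ⊆ B → toFun A ≤ toFun B
  union_of_disjoint : ∀ A B, Disjoint A B → toFun (A ∪ B) = toFun A + toFun B
  conj_image : ∀ (g : Γ) (A : Set Γ), toFun ((fun x => g * x * g⁻¹) '' A) = toFun A

theorem innerAmenable_iff {Γ : Type*} [Group Γ] :
    InnerAmenable Γ ↔ Nonempty (ConjInvariantMean Γ) :=
  ⟨fun ⟨m, h1, h2, h3, h4, h5, h6⟩ => ⟨⟨m, h1, h2, h3, h4, h5, h6⟩⟩,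
    fun ⟨M⟩ => ⟨M.toFun, M.compl_one, M.singleton_one, M.nonneg, M.mono, M.union_of_disjoint,
      M.conj_image⟩⟩

namespace ConjInvariantMean

variable {Γ : Type*} [Group Γ]

instance : CoeFun (ConjInvariantMean Γ) (fun _ => Set Γ → ℝ) := ⟨toFun⟩

variable (M : ConjInvariantMean Γ)

theorem measure_univ : M univ = 1 := by
  rw [← compl_union_self {1}, M.union_of_disjoint _ _ disjoint_compl_left, M.compl_one,
    M.singleton_one, add_zero]

theorem measure_empty : M ∅ = 0 := by
  simpa using M.union_of_disjoint ∅ ∅ (disjoint_empty _)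

theorem measure_le_one (A : Set Γ) : M A ≤ 1 :=
  M.measure_univ ▸ M.mono _ _ (subset_univ A)

theorem measure_union_le (A B : Set Γ) : M (A ∪ B) ≤ M A + M B := by
  rw [← union_sdiff_self, M.union_of_disjoint _ _ disjoint_sdiff_right]
  linarith [M.mono _ _ (sdiff_subset : B \ A ⊆ B)]

theorem measure_biUnion_finset_le {ι : Type*} (s : Finset ι) (A : ι → Set Γ) :
    M (⋃ i ∈ s, A i) ≤ ∑ i ∈ s, M (A i) := by
  classical
  induction s using Finset.induction_on with
  | empty => simp [M.measure_empty]
  | insert i s hi ih =>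
    rw [Finset.set_biUnion_insert, Finset.sum_insert hi]
    linarith [M.measure_union_le (A i) (⋃ j ∈ s, A j)]

theorem measure_biUnion_finset {ι : Type*} (s : Finset ι) (A : ι → Set Γ)
    (hA : Pairwise (Disjoint on A)) : M (⋃ i ∈ s, A i) = ∑ i ∈ s, M (A i) := by
  classical
  induction s using Finset.induction_on with
  | empty => simp [M.measure_empty]
  | insert i s hi ih =>
    rw [Finset.set_biUnion_insert, Finset.sum_insert hi, ← ih, M.union_of_disjoint _ _
      (disjoint_iUnion₂_right.2 fun j hj => hA (ne_of_mem_of_not_mem hj hi).symm)]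

theorem measure_eq_zero_of_forall_exists_conj_mem {ι : Type*} [Finite ι] {S : Set Γ}
    {Z : ι → Set Γ} (y : ι → Γ) (hZ : ∀ i, M (Z i) = 0)
    (hS : ∀ x ∈ S, ∃ i, y i * x * (y i)⁻¹ ∈ Z i) : M S = 0 := by
  have := Fintype.ofFinite ι
  set T : ι → Set Γ := fun i => {x | y i * x * (y i)⁻¹ ∈ Z i}
  have hT : ∀ i, M (T i) = 0 := fun i => by
    have : (fun x => y i * x * (y i)⁻¹) '' T i ⊆ Z i := image_subset_iff.2 fun _ hx => hx
    linarith [M.conj_image (y i) (T i), M.mono _ _ this, hZ i, M.nonneg (T i)]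
  have hST : S ⊆ ⋃ i ∈ Finset.univ, T i := fun x hx => by simpa [T] using hS x hx
  refine le_antisymm ?_ (M.nonneg S)
  calc M S ≤ ∑ i, M (T i) := (M.mono _ _ hST).trans (M.measure_biUnion_finset_le _ _)
    _ = 0 := by simp [hT]

theorem measure_eq_zero_of_pairwise_disjoint_conj_pow {S : Set Γ} (g : Γ)
    (hS : Pairwise (Disjoint on fun n : ℕ => (fun x => g ^ n * x * (g ^ n)⁻¹) '' S)) :
    M S = 0 := by
  have hN : ∀ N : ℕ, N * M S ≤ 1 := fun N => by
    have := M.measure_biUnion_finset (Finset.range N) _ hS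
    simp only [M.conj_image, Finset.sum_const, Finset.card_range, nsmul_eq_mul] at this
    exact this ▸ M.measure_le_one _
  by_contra hne
  have hpos := lt_of_le_of_ne (M.nonneg S) (Ne.symm hne)
  obtain ⟨N, hN'⟩ := exists_nat_gt (1 / M S)
  linarith [hN N, (div_lt_iff₀ hpos).1 hN']

theorem measure_compl_ne_zero_of_iInf_map_conj_eq_bot {ι : Type*} [Finite ι] (H : Subgroup Γ)
    (h : ι → Γ) (hH : ⨅ i, H.map (MulAut.conj (h i)).toMonoidHom = ⊥) :
    M (H : Set Γ)ᶜ ≠ 0 := by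
  intro hM
  have : M {1}ᶜ = 0 := by
    refine M.measure_eq_zero_of_forall_exists_conj_mem (fun i => (h i)⁻¹) (fun _ => hM) ?_
    intro x hx
    by_contra! hall
    refine hx (Subgroup.mem_bot.1 (hH ▸ Subgroup.mem_iInf.2 fun i => ?_))
    rw [Subgroup.mem_map_equiv, MulAut.conj_symm_apply]
    simpa using hall i
  simp [M.compl_one] at this

end ConjInvariantMean

theorem List.eq_of_replicate_append_cons_eq {α : Type*} {a b : α} (hab : a ≠ b) :
    ∀ {m n : ℕ} {l l' : List α}, replicate m a ++ b :: l = replicate n a ++ b :: l' → m = n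
  | 0, 0, _, _, _ => rfl
  | 0, _ + 1, _, _, h => by simp [replicate_succ] at h; exact (hab h.1.symm).elim
  | _ + 1, 0, _, _, h => by simp [replicate_succ] at h; exact (hab h.1).elim
  | _ + 1, _ + 1, _, _, h => by
    simp only [replicate_succ, cons_append, cons.injEq, true_and] at h
    rw [List.eq_of_replicate_append_cons_eq hab h]

theorem List.IsChain.cons_append_singleton {α : Type*} {R : α → α → Prop} {a b : α}
    {l : List α} (hl : l.IsChain R) (ha : ∀ c ∈ (l ++ [b]).head?, R a c)
    (hb : ∀ c ∈ l.getLast?, R c b) : (a :: l ++ [b]).IsChain R :=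
  (hl.append (isChain_singleton b) (by simpa using hb)).cons ha

namespace HNNExtension

open NormalWord

variable {G : Type*} [Group G] {A B : Subgroup G} {φ : A ≃* B}

-- The adjacency relation of `ReducedWord.chain`: no pinch `t^u g t^(-u)` with
-- `g ∈ toSubgroup A B u`.
variable (A B) in
def NoPinch (p q : ℤˣ × G) : Prop := p.2 ∈ toSubgroup A B p.1 → p.1 = q.1

theorem noPinch_of_fst_eq {p q : ℤˣ × G} (h : p.1 = q.1) : NoPinch A B p q := fun _ => h

theorem noPinch_of_not_mem {p q : ℤˣ × G} (h : p.2 ∉ toSubgroup A B p.1) : NoPinch A B p q :=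
  fun h' => (h h').elim

theorem noPinch_of_getLast?_fst {L : List (ℤˣ × G)} {b : ℤˣ × G}
    (h : (L.map Prod.fst).getLast? = some b.1) : ∀ p ∈ L.getLast?, NoPinch A B p b :=
  fun p hp => noPinch_of_fst_eq (by simpa [Option.mem_def.1 hp] using h)

theorem exists_reducedWord_prod_eq (x : HNNExtension G A B φ) :
    ∃ w : ReducedWord G A B, w.prod φ = x := by
  obtain ⟨d⟩ := TransversalPair.nonempty G A B
  exact ⟨(equiv φ d x).toReducedWord, (equiv φ d).symm_apply_apply x⟩

/-- The exponents of `t` in a reduced word for `x`; independent of the word by `pattern_prod`. -/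
noncomputable def pattern (x : HNNExtension G A B φ) : List ℤˣ :=
  (exists_reducedWord_prod_eq x).choose.toList.map Prod.fst

theorem pattern_prod (w : ReducedWord G A B) :
    pattern (w.prod φ) = w.toList.map Prod.fst :=
  (ReducedWord.map_fst_eq_and_of_prod_eq φ (exists_reducedWord_prod_eq (w.prod φ)).choose_spec).1

theorem pattern_conj_t_pow (w : ReducedWord G A B) (u : ℤˣ)
    (hw : ((u, w.head) :: w.toList ++ [(-u, 1)]).IsChain (NoPinch A B)) :
    pattern (t ^ (u : ℤ) * w.prod φ * (t ^ (u : ℤ))⁻¹) = u :: w.toList.map Prod.fst ++ [-u] := by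
  have : t ^ (u : ℤ) * w.prod φ * (t ^ (u : ℤ))⁻¹ = (⟨1, _, hw⟩ : ReducedWord G A B).prod φ := by
    simp [ReducedWord.prod, mul_assoc]
  rw [this, pattern_prod]
  simp

-- The final letter `t^(-u)` is what lets conjugation by `t^u` create no pinch.
variable (φ) in
def runSet (u : ℤˣ) (n : ℕ) : Set (HNNExtension G A B φ) :=
  {x | (∃ l, pattern x = List.replicate n u ++ -u :: l) ∧ (pattern x).getLast? = some (-u)}

theorem mem_runSet {u : ℤˣ} {n : ℕ} {x : HNNExtension G A B φ} :
    x ∈ runSet φ u n ↔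
      (∃ l, pattern x = List.replicate n u ++ -u :: l) ∧ (pattern x).getLast? = some (-u) :=
  Iff.rfl

theorem runSet_disjoint {u : ℤˣ} {m n : ℕ} (hmn : m ≠ n) :
    Disjoint (runSet φ u m) (runSet φ u n) :=
  Set.disjoint_left.2 fun _ ⟨⟨_, hm⟩, _⟩ ⟨⟨_, hn⟩, _⟩ =>
    hmn <| List.eq_of_replicate_append_cons_eq (Int.units_ne_iff_eq_neg.2 (neg_neg u).symm)
      (hm.symm.trans hn)

theorem conj_t_pow_mem_runSet_succ {u : ℤˣ} {n : ℕ} (hn : n ≠ 0) {x : HNNExtension G A B φ}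
    (hx : x ∈ runSet φ u n) : t ^ (u : ℤ) * x * (t ^ (u : ℤ))⁻¹ ∈ runSet φ u (n + 1) := by
  obtain ⟨w, rfl⟩ := exists_reducedWord_prod_eq x
  obtain ⟨⟨l, hl⟩, hlast⟩ := hx
  rw [pattern_prod] at hl hlast
  obtain ⟨k, rfl⟩ := Nat.exists_eq_succ_of_ne_zero hn
  have hchain : ((u, w.head) :: w.toList ++ [(-u, 1)]).IsChain (NoPinch A B) := by
    refine w.chain.cons_append_singleton (fun c hc => noPinch_of_fst_eq ?_)
      (noPinch_of_getLast?_fst hlast)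
    rcases hL : w.toList with _ | ⟨p, L⟩ <;> simp_all [List.replicate_succ]
  rw [mem_runSet, pattern_conj_t_pow w u hchain]
  exact ⟨⟨l ++ [-u], by simp [hl, List.replicate_succ]⟩, List.getLast?_concat⟩

theorem conj_t_pow_pow_mem_runSet (u : ℤˣ) (n : ℕ) {x : HNNExtension G A B φ}
    (hx : x ∈ runSet φ u 1) :
    (t ^ (u : ℤ)) ^ n * x * ((t ^ (u : ℤ)) ^ n)⁻¹ ∈ runSet φ u (n + 1) := by
  induction n with
  | zero => simpa using hx
  | succ n ih =>
    have := conj_t_pow_mem_runSet_succ n.succ_ne_zero ih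
    convert this using 1
    group

theorem conj_t_pow_prod_mem_runSet_one (w : ReducedWord G A B) {u : ℤˣ}
    (hhead : w.head ∉ toSubgroup A B u) (hfirst : ∀ e ∈ (w.toList.map Prod.fst).head?, e = -u)
    (hlast : ∀ p ∈ w.toList.getLast?, NoPinch A B p (-u, 1)) :
    t ^ (u : ℤ) * w.prod φ * (t ^ (u : ℤ))⁻¹ ∈ runSet φ u 1 := by
  have hchain := w.chain.cons_append_singleton (a := (u, w.head))
    (fun _ _ => noPinch_of_not_mem hhead) hlast
  rw [mem_runSet, pattern_conj_t_pow w u hchain]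
  refine ⟨?_, List.getLast?_concat⟩
  rcases hL : w.toList with _ | ⟨p, L⟩
  · exact ⟨[], rfl⟩
  · simp only [hL, List.map_cons, List.head?_cons, Option.mem_def, Option.some.injEq,
      forall_eq'] at hfirst
    exact ⟨L.map Prod.fst ++ [-u], by simp [hfirst]⟩

theorem conj_t_pow_mul_of_prod_mem_runSet_one (w : ReducedWord G A B) {u : ℤˣ} {c : G}
    (hhead : c * w.head ∉ toSubgroup A B u) (hfirst : (w.toList.map Prod.fst).head? = some (-u))
    (hlast : (w.toList.map Prod.fst).getLast? = some (-u)) :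
    t ^ (u : ℤ) * of c * w.prod φ * (t ^ (u : ℤ) * of c)⁻¹ ∈ runSet φ u 1 := by
  obtain ⟨L, q, hL⟩ := (w.toList.eq_nil_or_concat').resolve_left (by rintro h; simp [h] at hlast)
  have hchain : (L ++ [(q.1, q.2 * c⁻¹)]).IsChain (NoPinch A B) := by
    obtain ⟨hL', -, hjoin⟩ := List.isChain_append.1 (hL ▸ w.chain)
    exact hL'.append (List.isChain_singleton _) fun p hp _ hy => by
      simp only [List.head?_cons, Option.mem_def, Option.some.injEq] at hy
      subst hy
      exact hjoin p hp q rfl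
  let w' : ReducedWord G A B := ⟨c * w.head, _, hchain⟩
  have hmap : w'.toList.map Prod.fst = w.toList.map Prod.fst := by simp [w', hL]
  have := conj_t_pow_prod_mem_runSet_one (φ := φ) w' hhead (by simp [hmap, hfirst])
    (noPinch_of_getLast?_fst (by rw [hmap, hlast]))
  convert this using 1
  simp [w', ReducedWord.prod, hL]
  group

theorem conj_t_pow_mul_of_mul_t_pow_inv_prod_mem_runSet_one (w : ReducedWord G A B) {u : ℤˣ} {c : G}
    (hc : c ∉ toSubgroup A B u) (hfirst : (w.toList.map Prod.fst).head? = some (-u))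
    (hlast : (w.toList.map Prod.fst).getLast? = some u) :
    t ^ (u : ℤ) * of c * (t ^ (u : ℤ))⁻¹ * w.prod φ * (t ^ (u : ℤ) * of c * (t ^ (u : ℤ))⁻¹)⁻¹ ∈
      runSet φ u 1 := by
  have hchain := w.chain.cons_append_singleton (a := (-u, w.head))
    (fun p hp => noPinch_of_fst_eq ?_) (noPinch_of_getLast?_fst (b := (u, c⁻¹)) hlast)
  · let w' : ReducedWord G A B := ⟨c, _, hchain⟩
    have := conj_t_pow_prod_mem_runSet_one (φ := φ) w' hc (by simp [w'])
      fun p hp => by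
        obtain rfl : p = (u, c⁻¹) := Option.some_inj.1 (hp.symm.trans List.getLast?_concat)
        exact noPinch_of_not_mem (by simpa using hc)
    convert this using 1
    simp [w', ReducedWord.prod]
    group
  · obtain ⟨r, hr, hr1⟩ := Option.map_eq_some_iff.1 (List.head?_map ▸ hfirst)
    rw [List.head?_append, hr, Option.some_or, Option.mem_def, Option.some_inj] at hp
    rw [← hp, hr1]

variable (φ) in
def runConjugator (c : G) (u : ℤˣ) : Fin 3 → HNNExtension G A B φ :=
  ![t ^ (u : ℤ), t ^ (u : ℤ) * of c, t ^ (u : ℤ) * of c * (t ^ (u : ℤ))⁻¹]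

theorem exists_runConjugator_conj_mem_runSet_one {c : ℤˣ → G}
    (hc : ∀ u, c u ∉ toSubgroup A B u) {x : HNNExtension G A B φ} (hx : x ∉ A.map of) :
    ∃ u k, runConjugator φ (c u) u k * x * (runConjugator φ (c u) u k)⁻¹ ∈ runSet φ u 1 := by
  obtain ⟨w, rfl⟩ := exists_reducedWord_prod_eq x
  rcases hL : w.toList with _ | ⟨p, L⟩
  · have hhead : w.head ∉ toSubgroup A B 1 := fun h =>
      hx (Subgroup.mem_map.2 ⟨w.head, h, by simp [ReducedWord.prod, hL]⟩)
    exact ⟨1, 0, conj_t_pow_prod_mem_runSet_one w hhead (by simp [hL]) (by simp [hL])⟩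
  set u := -p.1
  have hfirst : (w.toList.map Prod.fst).head? = some (-u) := by simp [hL, u]
  obtain ⟨δ, hδ⟩ : ∃ δ, (w.toList.map Prod.fst).getLast? = some δ :=
    Option.ne_none_iff_exists'.1 (by simp [hL])
  obtain rfl | rfl : δ = -u ∨ δ = u :=
    (em (δ = -u)).imp_right fun h => by simpa using Int.units_ne_iff_eq_neg.1 h
  · by_cases hmem : w.head ∈ toSubgroup A B u
    · exact ⟨u, 1, conj_t_pow_mul_of_prod_mem_runSet_one w
        ((mul_mem_cancel_right hmem).not.2 (hc u)) hfirst hδ⟩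
    · exact ⟨u, 0, conj_t_pow_prod_mem_runSet_one w hmem (by simp [hfirst])
        (noPinch_of_getLast?_fst hδ)⟩
  · exact ⟨u, 2, conj_t_pow_mul_of_mul_t_pow_inv_prod_mem_runSet_one w (hc u) hfirst hδ⟩

theorem measure_runSet_one (M : ConjInvariantMean (HNNExtension G A B φ)) (u : ℤˣ) :
    M (runSet φ u 1) = 0 :=
  M.measure_eq_zero_of_pairwise_disjoint_conj_pow (t ^ (u : ℤ)) fun m n hmn =>
    (runSet_disjoint (φ := φ) (u := u) (m := m + 1) (n := n + 1) (by omega)).mono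
      (Set.image_subset_iff.2 fun _ => conj_t_pow_pow_mem_runSet u m)
      (Set.image_subset_iff.2 fun _ => conj_t_pow_pow_mem_runSet u n)

theorem measure_compl_map_of_eq_zero (M : ConjInvariantMean (HNNExtension G A B φ))
    (hA : A ≠ ⊤) (hB : B ≠ ⊤) :
    M ((A.map of : Subgroup (HNNExtension G A B φ)) : Set _)ᶜ = 0 := by
  have hc : ∀ u : ℤˣ, ∃ c, c ∉ toSubgroup A B u := fun u => by
    rcases Int.units_eq_one_or u with rfl | rfl
    exacts [SetLike.exists_not_mem_of_ne_top A hA, SetLike.exists_not_mem_of_ne_top B hB]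
  choose c hc using hc
  refine M.measure_eq_zero_of_forall_exists_conj_mem
    (fun i : ℤˣ × Fin 3 => runConjugator φ (c i.1) i.1 i.2) (fun i => measure_runSet_one M i.1)
    fun x hx => ?_
  obtain ⟨u, k, h⟩ := exists_runConjugator_conj_mem_runSet_one hc hx
  exact ⟨(u, k), h⟩

end HNNExtension

theorem stmt0_general {G : Type*} [Group G] (Λ B : Subgroup G) (θ : Λ ≃* B)
    (hΛ : Λ ≠ ⊤) (hB : B ≠ ⊤)
    (m : ℕ) (h : Fin m → HNNExtension G Λ B θ)
    (hcore : (⨅ i : Fin m, Subgroup.map (MulAut.conj (h i)).toMonoidHom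
        (Λ.map (HNNExtension.of : G →* HNNExtension G Λ B θ))) = ⊥) :
    ¬ InnerAmenable (HNNExtension G Λ B θ) := by
  rw [innerAmenable_iff]
  rintro ⟨M⟩
  exact M.measure_compl_ne_zero_of_iInf_map_conj_eq_bot _ h hcore
    (HNNExtension.measure_compl_map_of_eq_zero M hΛ hB)

/-- Lemma 8.2(1): if `Λ ≠ G`, `θ(Λ) ≠ G` and some finite intersection of conjugates of `Λ`
in the HNN extension `Γ = HNN(G, Λ, θ)` is trivial, then `Γ` is not inner amenable. -/
theorem stmt0 {G : Type*} [Group G] [Countable G] (Λ B : Subgroup G) (θ : Λ ≃* B)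
    (hΛ : Λ ≠ ⊤) (hB : B ≠ ⊤)
    (m : ℕ) (hm : 1 ≤ m) (h : Fin m → HNNExtension G Λ B θ)
    (hcore : (⨅ i : Fin m, Subgroup.map (MulAut.conj (h i)).toMonoidHom
        (Λ.map (HNNExtension.of : G →* HNNExtension G Λ B θ))) = ⊥) :
    ¬ InnerAmenable (HNNExtension G Λ B θ) :=
  stmt0_general Λ B θ hΛ hB m h hcore
end

section
/- Let a group Γ act on a set X, let m be a Γ-invariant finitely additive probability measure on the subsets of X, and let S, U, V ⊆ X. Suppose there are g₁, g₂, g₃, g₄ ∈ Γ with g₁·S ⊆ U, g₂·S ⊆ V, g₃·U ⊆ S, g₄·V ⊆ S, and (g₃·U) ∩ (g₄·V) = ∅. Then m(S) = m(U) = m(V) = 0. -/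
/-!
Translating `S` into `U` and into `V` gives `m S ≤ m U` and `m S ≤ m V`, while the disjoint
translates of `U` and `V` inside `S` give `m U + m V ≤ m S`. Hence `2 m S ≤ m S`, so `m S = 0`,
and then `m U + m V ≤ 0` forces `m U = m V = 0`.
-/

section InvariantMonotone

variable {Γ X : Type*} [Group Γ] [MulAction Γ X] {m : Set X → ℝ}
  (h_mono : ∀ A B : Set X, A ⊆ B → m A ≤ m B)
  (h_inv : ∀ (g : Γ) (A : Set X), m ((fun x => g • x) '' A) = m A)
include h_mono h_inv

theorem le_of_image_smul_subset {A B : Set X} {g : Γ}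
    (h : (fun x => g • x) '' A ⊆ B) : m A ≤ m B :=
  h_inv g A ▸ h_mono _ _ h

theorem add_le_of_disjoint_image_smul_subset
    (h_add : ∀ A B : Set X, Disjoint A B → m (A ∪ B) = m A + m B)
    {S U V : Set X} {g h : Γ}
    (hU : (fun x => g • x) '' U ⊆ S) (hV : (fun x => h • x) '' V ⊆ S)
    (hdisj : Disjoint ((fun x => g • x) '' U) ((fun x => h • x) '' V)) :
    m U + m V ≤ m S := by
  rw [← h_inv g U, ← h_inv h V, ← h_add _ _ hdisj]
  exact h_mono _ _ (Set.union_subset hU hV)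

end InvariantMonotone

theorem stmt2_general {Γ X : Type*} [Group Γ] [MulAction Γ X]
    (m : Set X → ℝ)
    (h_nonneg : ∀ A : Set X, 0 ≤ m A)
    (h_mono : ∀ A B : Set X, A ⊆ B → m A ≤ m B)
    (h_add : ∀ A B : Set X, Disjoint A B → m (A ∪ B) = m A + m B)
    (h_inv : ∀ (g : Γ) (A : Set X), m ((fun x => g • x) '' A) = m A)
    (S U V : Set X) (g₁ g₂ g₃ g₄ : Γ)
    (h1 : (fun x => g₁ • x) '' S ⊆ U)
    (h2 : (fun x => g₂ • x) '' S ⊆ V)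
    (h3 : (fun x => g₃ • x) '' U ⊆ S)
    (h4 : (fun x => g₄ • x) '' V ⊆ S)
    (hdisj : Disjoint ((fun x => g₃ • x) '' U) ((fun x => g₄ • x) '' V)) :
    m S = 0 ∧ m U = 0 ∧ m V = 0 := by
  have hSU : m S ≤ m U := le_of_image_smul_subset h_mono h_inv h1
  have hSV : m S ≤ m V := le_of_image_smul_subset h_mono h_inv h2
  have hUV : m U + m V ≤ m S :=
    add_le_of_disjoint_image_smul_subset h_mono h_inv h_add h3 h4 hdisj
  have := h_nonneg S
  have := h_nonneg U
  have := h_nonneg V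
  refine ⟨?_, ?_, ?_⟩ <;> linarith

/-- Abstract ping-pong lemma for invariant finitely additive probability measures:
if `g₁·S ⊆ U`, `g₂·S ⊆ V`, `g₃·U ⊆ S`, `g₄·V ⊆ S` and `g₃·U`, `g₄·V` are disjoint,
then `m S = m U = m V = 0`. -/
theorem stmt2 {Γ X : Type*} [Group Γ] [MulAction Γ X]
    (m : Set X → ℝ)
    (h_total : m Set.univ = 1)
    (h_nonneg : ∀ A : Set X, 0 ≤ m A)
    (h_mono : ∀ A B : Set X, A ⊆ B → m A ≤ m B)
    (h_add : ∀ A B : Set X, Disjoint A B → m (A ∪ B) = m A + m B)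
    (h_inv : ∀ (g : Γ) (A : Set X), m ((fun x => g • x) '' A) = m A)
    (S U V : Set X) (g₁ g₂ g₃ g₄ : Γ)
    (h1 : (fun x => g₁ • x) '' S ⊆ U)
    (h2 : (fun x => g₂ • x) '' S ⊆ V)
    (h3 : (fun x => g₃ • x) '' U ⊆ S)
    (h4 : (fun x => g₄ • x) '' V ⊆ S)
    (hdisj : Disjoint ((fun x => g₃ • x) '' U) ((fun x => g₄ • x) '' V)) :
    m S = 0 ∧ m U = 0 ∧ m V = 0 :=
  stmt2_general m h_nonneg h_mono h_add h_inv S U V g₁ g₂ g₃ g₄ h1 h2 h3 h4 hdisj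
end

section
/- Let Γ = HNN(G, Λ, θ) with stable letter t, where Λ ≠ G. Define a map b : Γ → ℂ(Γ/Λ) (finitely supported functions on Γ/Λ) by b(g) = 0 for g ∈ G and b(t) = δ_{tΛ}, extended by the cocycle identity b(gh) = b(g) + g·b(h) for the quasi-regular action of Γ on Γ/Λ. Then b is a well-defined cocycle, and for every g ∈ G \ Λ and n ≥ 1, b((gt)ⁿ) = Σ_{k=0}^{n-1} δ_{(gt)^k g t Λ} is a sum of n distinct basis vectors, so ‖b((gt)ⁿ)‖_{ℓ²} = √n; in particular b is unbounded. -/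
/-!
A cocycle `b : Γ → M` is the same thing as a homomorphism `Γ → M ⋊ Γ` splitting the
projection, `x ↦ (b x, x)`. By the universal property of the HNN extension such a splitting is
determined by `of x ↦ (0, x)` and `t ↦ (δ_{tΛ}, t)`; the relation `t a = θ(a) t` holds in
`M ⋊ Γ` because `θ(a) tΛ = t a Λ = tΛ`. Induction on the cocycle identity gives
`b((gt)ⁿ) = Σ_{k<n} δ_{(gt)^{k+1}Λ}`. These cosets are pairwise distinct: otherwise some
`(gt)^m` with `m > 0` lies in `Λ ⊆ G`, but the homomorphism `Γ → ℤ` counting the exponent of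
`t` is `m` on `(gt)^m` and `0` on `G`. Hence `‖b((gt)ⁿ)‖² = n`.
-/

open HNNExtension Multiplicative

section Splitting

variable {Γ M : Type*} [Group Γ] [AddCommGroup M] [DistribMulAction Γ M]

def DistribMulAction.toMulAutMultiplicative : Γ →* MulAut (Multiplicative M) :=
  (MulAutMultiplicative M).symm.toMonoidHom.comp (DistribMulAction.toAddAut Γ M)

@[simp] theorem DistribMulAction.toMulAutMultiplicative_apply (g : Γ) (m : M) :
    DistribMulAction.toMulAutMultiplicative g (ofAdd m) = ofAdd (g • m) :=
  rfl

theorem SemidirectProduct.toAdd_left_map_mul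
    (F : Γ →* Multiplicative M ⋊[DistribMulAction.toMulAutMultiplicative] Γ)
    (hF : ∀ x, (F x).right = x) (g h : Γ) :
    toAdd (F (g * h)).left = toAdd (F g).left + g • toAdd (F h).left := by
  rw [map_mul, SemidirectProduct.mul_left, hF]
  rfl

end Splitting

theorem QuotientGroup.mk_pow_injective_of_pow_notMem {Γ : Type*} [Group Γ] {H : Subgroup Γ}
    {x : Γ} (hx : ∀ m : ℕ, 0 < m → x ^ m ∉ H) :
    Function.Injective (fun k : ℕ => ((x ^ k : Γ) : Γ ⧸ H)) := by
  intro j k hjk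
  by_contra hne
  wlog hlt : j < k generalizing j k
  · exact this hjk.symm (Ne.symm hne) (by omega)
  refine hx (k - j) (by omega) ?_
  have hsub : (x ^ j)⁻¹ * x ^ k = x ^ (k - j) := by
    rw [inv_mul_eq_iff_eq_mul, ← pow_add, Nat.add_sub_of_le hlt.le]
  rw [← hsub]
  exact QuotientGroup.eq.mp hjk

theorem Finsupp.sum_support_norm_sq_sum_single_one {X ι R : Type*} [NormedRing R]
    [NormOneClass R] {q : ι → X} (hq : Function.Injective q) (s : Finset ι) :
    ∑ x ∈ (∑ k ∈ s, single (q k) (1 : R)).support,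
      ‖(∑ k ∈ s, single (q k) (1 : R)) x‖ ^ 2 = s.card := by
  classical
  have : Nontrivial R := NormOneClass.nontrivial
  have hsupp : (∑ k ∈ s, single (q k) (1 : R)).support = s.image q := by
    rw [support_sum_eq_biUnion _ fun i j hij => by simp [hq.ne hij]]
    simp [Finset.biUnion_singleton]
  have hval : ∀ k ∈ s, (∑ k ∈ s, single (q k) (1 : R)) (q k) = 1 := by
    intro k hk
    simp [finsetSum_apply, single_apply, hq.eq_iff, hk]
  rw [hsupp, Finset.sum_image hq.injOn, Finset.sum_congr rfl (fun k hk => by rw [hval k hk])]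
  simp

namespace HNNExtension

variable {G : Type*} [Group G] {A B : Subgroup G} {φ : A ≃* B}

def tExponent : HNNExtension G A B φ →* Multiplicative ℤ :=
  lift 1 (ofAdd 1) fun _ => by simp

@[simp] theorem tExponent_of (x : G) : tExponent (of x : HNNExtension G A B φ) = 1 := by
  simp [tExponent, lift_of]

@[simp] theorem tExponent_t : tExponent (t : HNNExtension G A B φ) = ofAdd 1 := by
  simp [tExponent, lift_t]

theorem tExponent_of_mul_t_pow (g : G) (m : ℕ) :
    tExponent ((of g * t : HNNExtension G A B φ) ^ m) = ofAdd (m : ℤ) := by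
  simp [← ofAdd_nsmul]

theorem of_mul_t_pow_notMem (g : G) {m : ℕ} (hm : 0 < m) :
    (of g * t : HNNExtension G A B φ) ^ m ∉ A.map of := by
  rintro ⟨a, -, ha⟩
  have := congrArg tExponent ha
  rw [tExponent_of, tExponent_of_mul_t_pow, eq_comm, ofAdd_eq_one] at this
  omega

section Cocycle

attribute [local instance] Finsupp.comapDistribMulAction

variable (A B φ) in
abbrev Cosets := HNNExtension G A B φ ⧸ A.map (of : G →* HNNExtension G A B φ)

variable (A B φ) in
noncomputable def stableLetterSplitting :
    HNNExtension G A B φ →*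
      Multiplicative (Cosets A B φ →₀ ℂ) ⋊[DistribMulAction.toMulAutMultiplicative]
        HNNExtension G A B φ :=
  lift (SemidirectProduct.inr.comp of)
    ⟨ofAdd (Finsupp.single (QuotientGroup.mk (t : HNNExtension G A B φ) : Cosets A B φ) 1), t⟩
    fun a => by
      ext : 1
      · have hfix : (of (φ a : G) : HNNExtension G A B φ) •
              (QuotientGroup.mk (t : HNNExtension G A B φ) : Cosets A B φ) =
            (QuotientGroup.mk (t : HNNExtension G A B φ) : Cosets A B φ) := by
          rw [MulAction.Quotient.smul_mk, smul_eq_mul, ← t_mul_of, QuotientGroup.mk_mul_of_mem]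
          exact Subgroup.mem_map_of_mem of a.2
        simp [Finsupp.comapSMul_single, hfix]
      · exact t_mul_of a

theorem stableLetterSplitting_right (x : HNNExtension G A B φ) :
    (stableLetterSplitting A B φ x).right = x := by
  suffices SemidirectProduct.rightHom.comp (stableLetterSplitting A B φ) = MonoidHom.id _ from
    DFunLike.congr_fun this x
  ext <;> simp [stableLetterSplitting, lift_of, lift_t]

variable (A B φ) in
noncomputable def stableLetterCocycle (x : HNNExtension G A B φ) : Cosets A B φ →₀ ℂ :=
  toAdd (stableLetterSplitting A B φ x).left

theorem stableLetterCocycle_mul (g h : HNNExtension G A B φ) :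
    stableLetterCocycle A B φ (g * h) =
      stableLetterCocycle A B φ g + g • stableLetterCocycle A B φ h :=
  SemidirectProduct.toAdd_left_map_mul _ stableLetterSplitting_right g h

@[simp] theorem stableLetterCocycle_of (x : G) : stableLetterCocycle A B φ (of x) = 0 := by
  simp [stableLetterCocycle, stableLetterSplitting, lift_of]

@[simp] theorem stableLetterCocycle_t :
    stableLetterCocycle A B φ t =
      Finsupp.single (QuotientGroup.mk (t : HNNExtension G A B φ) : Cosets A B φ) 1 := by
  simp [stableLetterCocycle, stableLetterSplitting, lift_t]

theorem stableLetterCocycle_of_mul_t_pow (g : G) (n : ℕ) :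
    stableLetterCocycle A B φ ((of g * t) ^ n) =
      ∑ k ∈ Finset.range n,
        Finsupp.single (QuotientGroup.mk ((of g * t) ^ k * (of g * t)) : Cosets A B φ) 1 := by
  induction n with
  | zero => simpa using stableLetterCocycle_of (A := A) (B := B) (φ := φ) 1
  | succ n ih =>
    have hgt : stableLetterCocycle A B φ (of g * t) =
        Finsupp.single (QuotientGroup.mk (of g * t) : Cosets A B φ) 1 := by
      simp [stableLetterCocycle_mul, Finsupp.comapSMul_single]
    rw [pow_succ, stableLetterCocycle_mul, ih, Finset.sum_range_succ, hgt,
      Finsupp.comapSMul_single]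
    rfl

theorem mk_of_mul_t_pow_mul_injective (g : G) :
    Function.Injective fun k : ℕ =>
      (QuotientGroup.mk ((of g * t) ^ k * (of g * t)) : Cosets A B φ) := by
  simp_rw [← pow_succ]
  exact (QuotientGroup.mk_pow_injective_of_pow_notMem fun m => of_mul_t_pow_notMem g).comp
    Nat.succ_injective

theorem sum_support_norm_sq_stableLetterCocycle_of_mul_t_pow (g : G) (n : ℕ) :
    ∑ q ∈ (stableLetterCocycle A B φ ((of g * t) ^ n)).support,
      ‖stableLetterCocycle A B φ ((of g * t) ^ n) q‖ ^ 2 = n := by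
  rw [stableLetterCocycle_of_mul_t_pow, Finsupp.sum_support_norm_sq_sum_single_one
    (mk_of_mul_t_pow_mul_injective g), Finset.card_range]

end Cocycle

end HNNExtension

theorem stmt6_general {G : Type*} [Group G] (A B : Subgroup G) (φ : A ≃* B) :
    ∃ b : HNNExtension G A B φ →
        ((HNNExtension G A B φ ⧸ A.map (of : G →* HNNExtension G A B φ)) →₀ ℂ),
      (∀ g h : HNNExtension G A B φ,
        b (g * h) = b g + Finsupp.mapDomain (fun q => g • q) (b h)) ∧
      (∀ x : G, b (of x) = 0) ∧
      (b t = Finsupp.single (QuotientGroup.mk (t : HNNExtension G A B φ)) 1) ∧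
      (∀ g : G, g ∉ A → ∀ n : ℕ, 1 ≤ n →
        (b ((of g * t) ^ n) =
          ∑ k ∈ Finset.range n,
            Finsupp.single (QuotientGroup.mk ((of g * t) ^ k * (of g * t))) 1) ∧
        Function.Injective (fun k : Fin n =>
          (QuotientGroup.mk ((of g * t) ^ (k : ℕ) * (of g * t)) :
            HNNExtension G A B φ ⧸ A.map (of : G →* HNNExtension G A B φ))) ∧
        (∑ q ∈ (b ((of g * t) ^ n)).support, ‖b ((of g * t) ^ n) q‖ ^ 2 = (n : ℝ))) ∧
      ¬ ∃ C : ℝ, ∀ x : HNNExtension G A B φ,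
          ∑ q ∈ (b x).support, ‖b x q‖ ^ 2 ≤ C := by
  refine ⟨stableLetterCocycle A B φ, stableLetterCocycle_mul, stableLetterCocycle_of,
    stableLetterCocycle_t, fun g _ n _ => ⟨stableLetterCocycle_of_mul_t_pow g n,
      fun j k hjk => Fin.ext (mk_of_mul_t_pow_mul_injective g hjk),
      sum_support_norm_sq_stableLetterCocycle_of_mul_t_pow g n⟩, ?_⟩
  rintro ⟨C, hC⟩
  obtain ⟨n, hn⟩ := exists_nat_gt C
  have hbound := hC ((of 1 * t) ^ n)
  rw [sum_support_norm_sq_stableLetterCocycle_of_mul_t_pow] at hbound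
  linarith

/-- On the HNN extension `Γ = HNN(G, Λ, θ)` with stable letter `t` and `Λ ≠ G`, there is a
cocycle `b : Γ → ℂ(Γ/Λ)` with `b ≡ 0` on `G` and `b(t) = δ_{tΛ}`; for `g ∈ G \ Λ` and `n ≥ 1`,
`b((gt)ⁿ) = Σ_{k=0}^{n-1} δ_{(gt)^k gtΛ}` is a sum of `n` distinct basis vectors, of squared
ℓ²-norm `n`; in particular `b` is unbounded. -/
theorem stmt6 {G : Type*} [Group G] (A B : Subgroup G) (φ : A ≃* B) (hA : A ≠ ⊤) :
    ∃ b : HNNExtension G A B φ →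
        ((HNNExtension G A B φ ⧸ A.map (of : G →* HNNExtension G A B φ)) →₀ ℂ),
      (∀ g h : HNNExtension G A B φ,
        b (g * h) = b g + Finsupp.mapDomain (fun q => g • q) (b h)) ∧
      (∀ x : G, b (of x) = 0) ∧
      (b t = Finsupp.single (QuotientGroup.mk (t : HNNExtension G A B φ)) 1) ∧
      (∀ g : G, g ∉ A → ∀ n : ℕ, 1 ≤ n →
        (b ((of g * t) ^ n) =
          ∑ k ∈ Finset.range n,
            Finsupp.single (QuotientGroup.mk ((of g * t) ^ k * (of g * t))) 1) ∧
        Function.Injective (fun k : Fin n =>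
          (QuotientGroup.mk ((of g * t) ^ (k : ℕ) * (of g * t)) :
            HNNExtension G A B φ ⧸ A.map (of : G →* HNNExtension G A B φ))) ∧
        (∑ q ∈ (b ((of g * t) ^ n)).support, ‖b ((of g * t) ^ n) q‖ ^ 2 = (n : ℝ))) ∧
      ¬ ∃ C : ℝ, ∀ x : HNNExtension G A B φ,
          ∑ q ∈ (b x).support, ‖b x q‖ ^ 2 ≤ C :=
  stmt6_general A B φ
end
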